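/- Let γ > 0 and let φ : ℝ → ℝ be nondecreasing and Lipschitz continuous with Lipschitz constant C_m and φ(0) = 0, and let u_*, v_* > 0 satisfy u_* = γv_*. Then for all u, v ∈ ℝ: φ(γv − u)·( max(u − u_*, 0) − max(v − v_*, 0) ) ≤ (2C_m·γ + C_m·(γ+1))·( (max(u − u_*, 0))² + (max(v − v_*, 0))² ). -/
import Mathlib


/-- Pointwise inequality used in the boundedness part of the maximum principle
(Lemma 3.2). -/
theorem boundedness_pointwise_inequality
    (γ Cm uStar vStar : ℝ) (hγ : 0 < γ)
    (huStar : 0 < uStar) (hvStar : 0 < vStar) (hstar : uStar = γ * vStar)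
    (φ : ℝ → ℝ)
    (hmono : Monotone φ) (hlip : ∀ a b : ℝ, |φ a - φ b| ≤ Cm * |a - b|)
    (hzero : φ 0 = 0) :
    ∀ u v : ℝ,
      φ (γ * v - u) * (max (u - uStar) 0 - max (v - vStar) 0)
        ≤ (2 * Cm * γ + Cm * (γ + 1)) *
          ((max (u - uStar) 0) ^ 2 + (max (v - vStar) 0) ^ 2) := by
  intro u v
  have hCm : 0 ≤ Cm := by
    have h := hlip 1 0
    simp [hzero] at h
    calc (0:ℝ) ≤ |φ 1| := abs_nonneg _
    _ ≤ Cm := h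
  set a := u - uStar with ha
  set b := v - vStar with hb
  have hx : γ * v - u = γ * b - a := by
    simp only [ha, hb, hstar]; ring
  rw [hx]
  have hub : φ (γ * b - a) ≤ Cm * |γ * b - a| := by
    have h := hlip (γ * b - a) 0
    simp [hzero] at h
    exact (abs_le.mp h).2
  have hlb : -(Cm * |γ * b - a|) ≤ φ (γ * b - a) := by
    have h := hlip (γ * b - a) 0
    simp [hzero] at h
    exact (abs_le.mp h).1
  have hsneg : γ * b - a ≤ 0 → φ (γ * b - a) ≤ 0 := fun h => by
    calc φ (γ * b - a) ≤ φ 0 := hmono h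
    _ = 0 := hzero
  have hspos : 0 ≤ γ * b - a → 0 ≤ φ (γ * b - a) := fun h => by
    calc (0:ℝ) = φ 0 := hzero.symm
    _ ≤ φ (γ * b - a) := hmono h
  rcases le_or_gt a 0 with hA | hA <;> rcases le_or_gt b 0 with hB | hB
  · -- a ≤ 0, b ≤ 0
    rw [max_eq_right hA, max_eq_right hB]
    have hR : 0 ≤ (2 * Cm * γ + Cm * (γ + 1)) * ((0:ℝ) ^ 2 + 0 ^ 2) := by positivity
    linarith [hR]
  · -- a ≤ 0, b > 0 : x ≥ γ b > 0 so φ ≥ 0, LHS ≤ 0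
    rw [max_eq_right hA, max_eq_left hB.le]
    have hxpos : 0 ≤ γ * b - a := by nlinarith
    have h1 := hspos hxpos
    have hR : 0 ≤ (2 * Cm * γ + Cm * (γ + 1)) * ((0:ℝ) ^ 2 + b ^ 2) := by positivity
    nlinarith [mul_nonneg h1 hB.le]
  · -- a > 0, b ≤ 0 : x ≤ -a < 0 so φ ≤ 0, LHS ≤ 0
    rw [max_eq_left hA.le, max_eq_right hB]
    have hxneg : γ * b - a ≤ 0 := by nlinarith
    have h1 := hsneg hxneg
    have hR : 0 ≤ (2 * Cm * γ + Cm * (γ + 1)) * (a ^ 2 + (0:ℝ) ^ 2) := by positivity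
    nlinarith [mul_nonpos_of_nonpos_of_nonneg h1 hA.le]
  · -- a > 0, b > 0
    rw [max_eq_left hA.le, max_eq_left hB.le]
    rcases le_or_gt (γ * b - a) 0 with hxs | hxs
    · -- φ x ≤ 0 and φ x ≥ Cm * (γb - a)
      have h1 := hsneg hxs
      have h2 : Cm * (γ * b - a) ≤ φ (γ * b - a) := by
        rw [abs_of_nonpos hxs] at hlb
        linarith
      rcases le_or_gt (a - b) 0 with hab | hab
      · -- a - b ≤ 0, product of φ ≤ 0 and (a-b) ≤ 0 is ≥ 0... need other bound
        have key : φ (γ * b - a) * (a - b) ≤ Cm * (γ * b - a) * (a - b) := by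
          nlinarith
        nlinarith [sq_nonneg (a - b), sq_nonneg (a + b), mul_pos hA hB,
          mul_nonneg hCm hγ.le, sq_nonneg a, sq_nonneg b]
      · have : φ (γ * b - a) * (a - b) ≤ 0 :=
          mul_nonpos_of_nonpos_of_nonneg h1 hab.le
        nlinarith [sq_nonneg a, sq_nonneg b, mul_nonneg hCm hγ.le]
    · -- φ x ≥ 0 and φ x ≤ Cm * (γb - a)
      have h1 := hspos hxs.le
      have h2 : φ (γ * b - a) ≤ Cm * (γ * b - a) := by
        rw [abs_of_nonneg hxs.le] at hub
        exact hub
      rcases le_or_gt (a - b) 0 with hab | hab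
      · have : φ (γ * b - a) * (a - b) ≤ 0 :=
          mul_nonpos_of_nonneg_of_nonpos h1 hab
        nlinarith [sq_nonneg a, sq_nonneg b, mul_nonneg hCm hγ.le]
      · have key : φ (γ * b - a) * (a - b) ≤ Cm * (γ * b - a) * (a - b) := by
          nlinarith
        nlinarith [sq_nonneg (a - b), sq_nonneg (a + b), mul_pos hA hB,
          mul_nonneg hCm hγ.le, sq_nonneg a, sq_nonneg b]
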